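/- Let (D, I) be a consistent action theory and δ its initial a-state. For every conditional plan p, if Φ̂(p, δ) ≠ ⊥ then Φ̂(p, δ) contains at least one valid a-state. -/
import Mathlib


noncomputable section
attribute [local instance] Classical.propDecidable

/-- A literal over the set of fluents `F`: a fluent together with a sign
(`true` for the fluent `f` itself, `false` for its negation `¬f`). -/
abbrev Lit (F : Type) : Type := F × Bool

/-- The complement `¬l` of a literal `l` (so that `¬¬f = f`). -/
def Lit.compl {F : Type} (l : Lit F) : Lit F := (l.1, !l.2)

/-- `¬γ = {¬l | l ∈ γ}`. -/
def negLits {F : Type} (γ : Set (Lit F)) : Set (Lit F) := Lit.compl '' γ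

/-- A set of literals is consistent if it contains no complementary pair. -/
def ConsistentLits {F : Type} (σ : Set (Lit F)) : Prop :=
  ∀ l : Lit F, ¬(l ∈ σ ∧ Lit.compl l ∈ σ)

/-- A static causal law `if(head, body)`: the body is a finite nonempty set of literals. -/
structure StaticLaw (F : Type) where
  head : Lit F
  body : Finset (Lit F)
  body_nonempty : body.Nonempty

/-- A set of literals `σ` satisfies the static causal law `r` if
`body ⊆ σ` implies `head ∈ σ`. -/
def SatLaw {F : Type} (σ : Set (Lit F)) (r : StaticLaw F) : Prop :=
  ↑r.body ⊆ σ → r.head ∈ σ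

/-- `σ` satisfies every static causal law in `D`. -/
def ClosedUnder {F : Type} (D : Set (StaticLaw F)) (σ : Set (Lit F)) : Prop :=
  ∀ r ∈ D, SatLaw σ r

/-- `Cl D σ`: the smallest set of literals containing `σ` and satisfying every
static causal law in `D`. -/
def Cl {F : Type} (D : Set (StaticLaw F)) (σ : Set (Lit F)) : Set (Lit F) :=
  ⋂₀ {τ | σ ⊆ τ ∧ ClosedUnder D τ}

/-- An interpretation: for each fluent exactly one of `f`, `¬f` belongs to it
(complete and consistent). -/
def Interp {F : Type} (σ : Set (Lit F)) : Prop :=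
  ∀ f : F, (((f, true) : Lit F) ∈ σ ∨ ((f, false) : Lit F) ∈ σ) ∧
    ¬(((f, true) : Lit F) ∈ σ ∧ ((f, false) : Lit F) ∈ σ)

/-- A state: an interpretation satisfying all static causal laws in `D`. -/
def IsState {F : Type} (D : Set (StaticLaw F)) (s : Set (Lit F)) : Prop :=
  Interp s ∧ ClosedUnder D s

/-- An a-state: a consistent set of literals satisfying all static causal laws in `D`. -/
def AState {F : Type} (D : Set (StaticLaw F)) (δ : Set (Lit F)) : Prop :=
  ConsistentLits δ ∧ ClosedUnder D δ

/-- A set of literals is valid if it is contained in some state. -/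
def ValidA {F : Type} (D : Set (StaticLaw F)) (δ : Set (Lit F)) : Prop :=
  ∃ s, IsState D s ∧ δ ⊆ s

/-- A domain description: executability conditions `executable(a, ψ)`,
dynamic causal laws `causes(a, l, φ)`, static causal laws `if(l, φ)`, and
k-propositions `determines(a, θ)`. -/
structure ActionDom (F A : Type) where
  execs : Set (A × Finset (Lit F))
  dyn : Set (A × Lit F × Finset (Lit F))
  stat : Set (StaticLaw F)
  kprops : Set (A × Finset (Lit F))

namespace ActionDom

variable {F A : Type}

/-- A non-sensing action: one occurring in a dynamic causal law. -/
def NonSensing (D : ActionDom F A) (a : A) : Prop := ∃ l φ, (a, l, φ) ∈ D.dyn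

/-- A sensing action: one occurring in a k-proposition. -/
def Sensing (D : ActionDom F A) (a : A) : Prop := ∃ θ, (a, θ) ∈ D.kprops

/-- Structural conditions on a domain description: all components are finite,
every k-proposition senses at least two literals, non-sensing and sensing actions
are disjoint, and each sensing action occurs in at most one k-proposition. -/
structure WellFormed (D : ActionDom F A) : Prop where
  execs_finite : D.execs.Finite
  dyn_finite : D.dyn.Finite
  stat_finite : D.stat.Finite
  kprops_finite : D.kprops.Finite
  kprops_card : ∀ p ∈ D.kprops, 2 ≤ p.2.card
  sensing_disjoint : ∀ a : A, ¬(D.NonSensing a ∧ D.Sensing a)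
  kprops_unique : ∀ a θ₁ θ₂, (a, θ₁) ∈ D.kprops → (a, θ₂) ∈ D.kprops → θ₁ = θ₂

/-- `a` is executable in `σ`: some `executable(a, ψ)` of `D` has `ψ ⊆ σ`. -/
def Executable (D : ActionDom F A) (a : A) (σ : Set (Lit F)) : Prop :=
  ∃ ψ, (a, ψ) ∈ D.execs ∧ ↑ψ ⊆ σ

/-- `E(a, σ) = {l | D contains causes(a, l, φ) with φ ⊆ σ}`. -/
def Eff (D : ActionDom F A) (a : A) (σ : Set (Lit F)) : Set (Lit F) :=
  {l | ∃ φ, (a, l, φ) ∈ D.dyn ∧ ↑φ ⊆ σ}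

/-- `e(a, σ) = Cl_D(E(a, σ))`. -/
def eEff (D : ActionDom F A) (a : A) (σ : Set (Lit F)) : Set (Lit F) :=
  Cl D.stat (D.Eff a σ)

/-- The possible-next-states function
`Res^c_D(a, s) = {s' | s' is a state and s' = Cl_D(E(a,s) ∪ (s ∩ s'))}`. -/
def ResC (D : ActionDom F A) (a : A) (s : Set (Lit F)) : Set (Set (Lit F)) :=
  {s' | IsState D.stat s' ∧ s' = Cl D.stat (D.Eff a s ∪ (s ∩ s'))}

/-- A consistent domain description: `Res^c_D(a, s) ≠ ∅` for every state `s` and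
action `a` executable in `s`. -/
def ConsistentDom (D : ActionDom F A) : Prop :=
  ∀ s a, IsState D.stat s → D.Executable a s → (D.ResC a s).Nonempty

/-- `pc^i(a, δ)`. -/
def pcIter (D : ActionDom F A) (a : A) (δ : Set (Lit F)) : ℕ → Set (Lit F)
  | 0 => {l | ∃ φ, (a, l, φ) ∈ D.dyn ∧ l ∉ δ ∧ negLits ↑φ ∩ δ = ∅}
  | i + 1 => D.pcIter a δ i ∪
      {l | ∃ r ∈ D.stat, r.head = l ∧ l ∉ δ ∧ (↑r.body ∩ D.pcIter a δ i).Nonempty ∧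
        negLits ↑r.body ∩ D.eEff a δ = ∅}

/-- `pc(a, δ) = ⋃_{i ≥ 0} pc^i(a, δ)`. -/
def pc (D : ActionDom F A) (a : A) (δ : Set (Lit F)) : Set (Lit F) :=
  ⋃ i, D.pcIter a δ i

/-- `Cl_D(e(a, δ) ∪ (δ ∖ ¬pc(a, δ)))`, the candidate next a-state after a
non-sensing action. -/
def nsNext (D : ActionDom F A) (a : A) (δ : Set (Lit F)) : Set (Lit F) :=
  Cl D.stat (D.eEff a δ ∪ (δ \ negLits (D.pc a δ)))

/-- The 0-result function `Res_D(a, δ)` (for `a` executable in `δ`): for a sensing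
action with k-proposition `determines(a, θ)`, the consistent sets `Cl_D(δ ∪ {g})`,
`g ∈ θ`; for a non-sensing action, `{Cl_D(e(a,δ) ∪ (δ ∖ ¬pc(a,δ)))}` if consistent,
and `∅` otherwise. -/
def Res (D : ActionDom F A) (a : A) (δ : Set (Lit F)) : Set (Set (Lit F)) :=
  if D.Sensing a then
    {δ' | ∃ θ, (a, θ) ∈ D.kprops ∧ ∃ g ∈ θ, δ' = Cl D.stat (δ ∪ {g}) ∧ ConsistentLits δ'}
  else
    {δ' | δ' = D.nsNext a δ ∧ ConsistentLits δ'}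

/-- The transition function: `⊥` (i.e. `none`) if `a` is not executable in `δ`,
and `Res_D(a, δ)` otherwise. -/
def Phi (D : ActionDom F A) (a : A) (δ : Set (Lit F)) : Option (Set (Set (Lit F))) :=
  if D.Executable a δ then some (D.Res a δ) else none

/-- The assumption that for every k-proposition `determines(a, θ)` of `D`,
in every state exactly one literal of `θ` holds. -/
def OneOfAssumption (D : ActionDom F A) : Prop :=
  ∀ a θ, (a, θ) ∈ D.kprops → ∀ s, IsState D.stat s → ∃! g : Lit F, g ∈ θ ∧ g ∈ s

end ActionDom

/-- Conditional plans: the empty plan `[]`; `[a; p]` for a (non-sensing) action `a`;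
and `[a; cases({g → cont g})]` for a (sensing) action `a`, where `cont` assigns a
sub-plan to each sensed literal. -/
inductive CondPlan (F A : Type) : Type where
  | nil : CondPlan F A
  | seq : A → CondPlan F A → CondPlan F A
  | branch : A → (Lit F → CondPlan F A) → CondPlan F A

/-- Well-formed conditional plans of a domain: `seq` uses non-sensing actions and
`branch` uses sensing actions. -/
def IsPlan {F A : Type} (D : ActionDom F A) : CondPlan F A → Prop
  | .nil => True
  | .seq a p => D.NonSensing a ∧ IsPlan D p
  | .branch a cont => D.Sensing a ∧ ∀ g : Lit F, IsPlan D (cont g)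

/-- The extended transition function `Φ̂`: maps a conditional plan and an a-state to a
set of a-states, or `none` (representing `⊥`, which absorbs unions). -/
def PhiHat {F A : Type} (D : ActionDom F A) :
    CondPlan F A → Set (Lit F) → Option (Set (Set (Lit F)))
  | .nil, δ => some {δ}
  | .seq a q, δ =>
    match D.Phi a δ with
    | none => none
    | some S =>
      if ∀ δ' ∈ S, (PhiHat D q δ').isSome then
        some (⋃ δ' ∈ S, (PhiHat D q δ').getD ∅)
      else none
  | .branch a cont, δ =>
    match D.Phi a δ with
    | none => none
    | some S =>
      if ∀ g : Lit F, ∀ δ' ∈ S, (∃ θ, (a, θ) ∈ D.kprops ∧ g ∈ θ) → g ∈ δ' →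
          (PhiHat D (cont g) δ').isSome then
        some (⋃ g : Lit F, ⋃ δ' ∈ S,
          ⋃ (_ : (∃ θ, (a, θ) ∈ D.kprops ∧ g ∈ θ) ∧ g ∈ δ'),
            (PhiHat D (cont g) δ').getD ∅)
      else none

section AuxProofs

variable {F A : Type}

lemma subset_Cl (D : Set (StaticLaw F)) (σ : Set (Lit F)) : σ ⊆ Cl D σ := by
  intro l hl
  exact Set.mem_sInter.mpr (fun τ hτ => hτ.1 hl)

lemma Cl_closed (D : Set (StaticLaw F)) (σ : Set (Lit F)) : ClosedUnder D (Cl D σ) := by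
  intro r hr hb
  exact Set.mem_sInter.mpr (fun τ hτ => hτ.2 r hr (fun x hx => Set.mem_sInter.mp (hb hx) τ hτ))

lemma Cl_min {D : Set (StaticLaw F)} {σ τ : Set (Lit F)} (h1 : σ ⊆ τ)
    (h2 : ClosedUnder D τ) : Cl D σ ⊆ τ :=
  fun _ hl => Set.mem_sInter.mp hl τ ⟨h1, h2⟩

lemma lit_compl_compl (l : Lit F) : l.compl.compl = l := by
  simp [Lit.compl]

lemma Interp.consistent {s : Set (Lit F)} (h : Interp s) : ConsistentLits s := by
  rintro ⟨f, b⟩ ⟨h1, h2⟩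
  have h2' : ((f, !b) : Lit F) ∈ s := h2
  cases b
  · exact (h f).2 ⟨h2', h1⟩
  · exact (h f).2 ⟨h1, h2'⟩

lemma Interp.total {s : Set (Lit F)} (h : Interp s) (l : Lit F) (hl : l ∉ s) :
    l.compl ∈ s := by
  obtain ⟨f, b⟩ := l
  rcases (h f).1 with h1 | h1
  · cases b
    · exact h1
    · exact absurd h1 hl
  · cases b
    · exact absurd h1 hl
    · exact h1

lemma consistent_subset {s σ : Set (Lit F)} (h : ConsistentLits s) (hsub : σ ⊆ s) :
    ConsistentLits σ := fun l ⟨h1, h2⟩ => h l ⟨hsub h1, hsub h2⟩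

/-- Key step lemma for non-sensing actions: after a non-sensing action executable in a
valid a-state, the candidate next a-state is consistent, an a-state, and valid. -/
lemma ns_step (D : ActionDom F A) (hcons : D.ConsistentDom) (a : A)
    (δ s : Set (Lit F)) (hs : IsState D.stat s) (hsub : δ ⊆ s)
    (hex : D.Executable a δ) :
    ConsistentLits (D.nsNext a δ) ∧ AState D.stat (D.nsNext a δ) ∧
      ValidA D.stat (D.nsNext a δ) := by
  have hscons : ConsistentLits s := hs.1.consistent
  have hexs : D.Executable a s := by
    obtain ⟨ψ, h1, h2⟩ := hex
    exact ⟨ψ, h1, h2.trans hsub⟩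
  obtain ⟨s', hs', heq⟩ := hcons s a hs hexs
  have hs'cons : ConsistentLits s' := hs'.1.consistent
  -- Eff a s ⊆ s'
  have hEs : D.Eff a s ⊆ s' := by
    intro l hl
    rw [heq]
    exact subset_Cl _ _ (Or.inl hl)
  -- eEff a δ ⊆ s'
  have heEδ : D.eEff a δ ⊆ s' := by
    apply Cl_min _ hs'.2
    intro l hl
    apply hEs
    obtain ⟨φ, h1, h2⟩ := hl
    exact ⟨φ, h1, h2.trans hsub⟩
  -- Step B: s' ⊆ s ∪ pc a δ
  have hB : s' ⊆ s ∪ D.pc a δ := by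
    have hT : s' ⊆ s' ∩ (s ∪ D.pc a δ) := by
      nth_rewrite 1 [heq]
      apply Cl_min
      · rintro l (hl | hl)
        · refine ⟨hEs hl, ?_⟩
          by_cases hls : l ∈ s
          · exact Or.inl hls
          · refine Or.inr (Set.mem_iUnion.mpr ⟨0, ?_⟩)
            obtain ⟨φ, h1, h2⟩ := hl
            refine ⟨φ, h1, fun hlδ => hls (hsub hlδ), ?_⟩
            ext m
            simp only [Set.mem_inter_iff, Set.mem_empty_iff_false, iff_false, not_and]
            rintro ⟨m', hm', rfl⟩ hmδ
            exact hscons m' ⟨h2 hm', hsub hmδ⟩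
        · exact ⟨hl.2, Or.inl hl.1⟩
      · intro r hr hb
        have hbody : ↑r.body ⊆ s' := fun x hx => (hb hx).1
        have hhead : r.head ∈ s' := hs'.2 r hr hbody
        refine ⟨hhead, ?_⟩
        by_cases hhs : r.head ∈ s
        · exact Or.inl hhs
        · right
          have hnδ : r.head ∉ δ := fun h => hhs (hsub h)
          -- some body literal outside s
          have : ¬ (↑r.body ⊆ s) := fun h => hhs (hs.2 r hr h)
          obtain ⟨l, hlb, hls⟩ := Set.not_subset.mp this
          have hlpc : l ∈ D.pc a δ := by
            rcases (hb hlb).2 with h | h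
            · exact absurd h hls
            · exact h
          obtain ⟨i, hi⟩ := Set.mem_iUnion.mp hlpc
          refine Set.mem_iUnion.mpr ⟨i + 1, Or.inr ⟨r, hr, rfl, hnδ, ⟨l, hlb, hi⟩, ?_⟩⟩
          ext m
          simp only [Set.mem_inter_iff, Set.mem_empty_iff_false, iff_false, not_and]
          rintro ⟨m', hm', rfl⟩ hme
          exact hs'cons m' ⟨hbody hm', heEδ hme⟩
    exact fun l hl => (hT hl).2
  -- Step C: δ \ negLits (pc a δ) ⊆ s'
  have hC : δ \ negLits (D.pc a δ) ⊆ s' := by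
    rintro l ⟨hlδ, hlpc⟩
    by_contra hls'
    have hcl : l.compl ∈ s' := hs'.1.total l hls'
    rcases hB hcl with h | h
    · exact hscons l.compl ⟨h, by rw [lit_compl_compl]; exact hsub hlδ⟩
    · exact hlpc ⟨l.compl, h, lit_compl_compl l⟩
  -- nsNext ⊆ s'
  have hsub' : D.nsNext a δ ⊆ s' :=
    Cl_min (Set.union_subset heEδ hC) hs'.2
  have hc : ConsistentLits (D.nsNext a δ) := consistent_subset hs'cons hsub'
  exact ⟨hc, ⟨hc, Cl_closed _ _⟩, ⟨s', hs', hsub'⟩⟩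

/-- Key step lemma for sensing actions. -/
lemma sens_step (D : ActionDom F A) (honeof : D.OneOfAssumption) (a : A)
    (θ : Finset (Lit F)) (hθ : (a, θ) ∈ D.kprops)
    (δ s : Set (Lit F)) (hs : IsState D.stat s) (hsub : δ ⊆ s) :
    ∃ g ∈ θ, ConsistentLits (Cl D.stat (δ ∪ {g})) ∧
      AState D.stat (Cl D.stat (δ ∪ {g})) ∧ ValidA D.stat (Cl D.stat (δ ∪ {g})) ∧
      g ∈ Cl D.stat (δ ∪ {g}) := by
  obtain ⟨g, ⟨hgθ, hgs⟩, -⟩ := honeof a θ hθ s hs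
  have hsub' : Cl D.stat (δ ∪ {g}) ⊆ s := by
    apply Cl_min _ hs.2
    rintro l (hl | hl)
    · exact hsub hl
    · rw [Set.mem_singleton_iff] at hl; exact hl ▸ hgs
  have hc : ConsistentLits (Cl D.stat (δ ∪ {g})) :=
    consistent_subset hs.1.consistent hsub'
  exact ⟨g, hgθ, hc, ⟨hc, Cl_closed _ _⟩, ⟨s, hs, hsub'⟩,
    subset_Cl _ _ (Or.inr rfl)⟩

lemma phiHat_aux (D : ActionDom F A) (hD : D.WellFormed) (hcons : D.ConsistentDom)
    (honeof : D.OneOfAssumption) :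
    ∀ p : CondPlan F A, IsPlan D p → ∀ δ : Set (Lit F), AState D.stat δ →
      ValidA D.stat δ → ∀ S : Set (Set (Lit F)), PhiHat D p δ = some S →
      ∃ δ' ∈ S, AState D.stat δ' ∧ ValidA D.stat δ' := by
  intro p
  induction p with
  | nil =>
    intro _ δ ha hv S hS
    simp only [PhiHat, Option.some_inj] at hS
    exact ⟨δ, hS ▸ rfl, ha, hv⟩
  | seq a q ih =>
    intro hp δ ha hv S hS
    obtain ⟨s, hs, hsubδ⟩ := hv
    simp only [PhiHat] at hS
    by_cases hexec : D.Executable a δ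
    · rw [ActionDom.Phi, if_pos hexec] at hS
      dsimp only at hS
      have hnsens : ¬ D.Sensing a := fun h => hD.sensing_disjoint a ⟨hp.1, h⟩
      have hRes : D.Res a δ = {δ' | δ' = D.nsNext a δ ∧ ConsistentLits δ'} := by
        rw [ActionDom.Res, if_neg hnsens]
      obtain ⟨hc, ha', hv'⟩ := ns_step D hcons a δ s hs hsubδ hexec
      have hmem : D.nsNext a δ ∈ D.Res a δ := by rw [hRes]; exact ⟨rfl, hc⟩
      split_ifs at hS with hcond
      · obtain ⟨S'', hS''⟩ := Option.isSome_iff_exists.mp (hcond _ hmem)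
        obtain ⟨δ'', hδ''S, h1, h2⟩ := ih hp.2 _ ha' hv' S'' hS''
        rw [Option.some_inj] at hS
        refine ⟨δ'', ?_, h1, h2⟩
        rw [← hS]
        exact Set.mem_biUnion hmem (by rw [hS'']; exact hδ''S)
    · rw [ActionDom.Phi, if_neg hexec] at hS
      exact absurd hS (by simp)
  | branch a cont ih =>
    intro hp δ ha hv S hS
    obtain ⟨s, hs, hsubδ⟩ := hv
    simp only [PhiHat] at hS
    by_cases hexec : D.Executable a δ
    · rw [ActionDom.Phi, if_pos hexec] at hS
      dsimp only at hS
      have hsens : D.Sensing a := hp.1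
      obtain ⟨θ, hθ⟩ := hsens
      obtain ⟨g, hgθ, hc, ha', hv', hgδ'⟩ := sens_step D honeof a θ hθ δ s hs hsubδ
      have hmem : Cl D.stat (δ ∪ {g}) ∈ D.Res a δ := by
        rw [ActionDom.Res, if_pos ⟨θ, hθ⟩]
        exact ⟨θ, hθ, g, hgθ, rfl, hc⟩
      split_ifs at hS with hcond
      · obtain ⟨S'', hS''⟩ := Option.isSome_iff_exists.mp
          (hcond g _ hmem ⟨θ, hθ, hgθ⟩ hgδ')
        obtain ⟨δ'', hδ''S, h1, h2⟩ := ih g (hp.2 g) _ ha' hv' S'' hS''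
        rw [Option.some_inj] at hS
        refine ⟨δ'', ?_, h1, h2⟩
        rw [← hS]
        refine Set.mem_iUnion.mpr ⟨g, Set.mem_iUnion.mpr ⟨Cl D.stat (δ ∪ {g}),
          Set.mem_iUnion.mpr ⟨hmem, Set.mem_iUnion.mpr ⟨⟨⟨θ, hθ, hgθ⟩, hgδ'⟩, ?_⟩⟩⟩⟩
        rw [hS'']
        exact hδ''S
    · rw [ActionDom.Phi, if_neg hexec] at hS
      exact absurd hS (by simp)

end AuxProofs
/-- For a consistent action theory `(D, I)` with initial a-state `δ = Cl_D({l | initially(l) ∈ I})`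
(i.e. `D` is consistent and `δ` is valid): for every conditional plan `p`, if `Φ̂(p, δ) ≠ ⊥`
then `Φ̂(p, δ)` contains at least one valid a-state. -/
theorem phiHat_contains_valid
    {F A : Type} [Finite F] [Finite A]
    (D : ActionDom F A) (hD : D.WellFormed) (hcons : D.ConsistentDom)
    (honeof : D.OneOfAssumption)
    (I δ : Set (Lit F)) (hδ : δ = Cl D.stat I) (hvalid : ValidA D.stat δ)
    (p : CondPlan F A) (hp : IsPlan D p)
    (S : Set (Set (Lit F))) (hS : PhiHat D p δ = some S) :
    ∃ δ' ∈ S, AState D.stat δ' ∧ ValidA D.stat δ' := by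
  obtain ⟨s, hs, hsub⟩ := hvalid
  have ha : AState D.stat δ :=
    ⟨consistent_subset hs.1.consistent hsub, hδ ▸ Cl_closed _ _⟩
  exact phiHat_aux D hD hcons honeof p hp δ ha ⟨s, hs, hsub⟩ S hS

end
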